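/- arXiv:1801.09234 — 4 statements merged into one kernel-verified Lean document; each statement's English description precedes it below -/
import Mathlib

section
/- Let A be a σ-quasinormal subgroup of a finite group G, and suppose that G possesses a Hall σ_i-subgroup for some i ∈ I. Then A permutes with every Hall σ_i-subgroup H of G, that is, AH = HA. -/
open Subgroup Pointwise

/-- A finite group (or any type) is a `π`-group if every prime dividing its
cardinality belongs to `π`. -/
def IsPiGroup (π : Set ℕ) (X : Type*) : Prop :=
  ∀ p : ℕ, p.Prime → p ∣ Nat.card X → p ∈ π

/-- The complementary set of primes `π'`. -/
def primeCompl (π : Set ℕ) : Set ℕ := {p : ℕ | p.Prime ∧ p ∉ π}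

/-- `σ : I → Set ℕ` is a partition of the set of all primes: the `σ i` consist of
primes, and every prime belongs to exactly one `σ i` (so they are pairwise
disjoint and their union is the set of all primes). -/
def IsPrimePartition {I : Type*} (σ : I → Set ℕ) : Prop :=
  (∀ i, ∀ p ∈ σ i, p.Prime) ∧ ∀ p : ℕ, p.Prime → ∃! i, p ∈ σ i

/-- A group is `σ`-primary if it is a `σ i`-group for some `i`. -/
def IsSigmaPrimary {I : Type*} (σ : I → Set ℕ) (X : Type*) : Prop :=
  ∃ i, IsPiGroup (σ i) X

/-- `σ (n)`: the set of indices `i` such that `σ i` contains a prime dividing `n`. -/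
def sigmaOf {I : Type*} (σ : I → Set ℕ) (n : ℕ) : Set I :=
  {i | ∃ p : ℕ, p.Prime ∧ p ∈ σ i ∧ p ∣ n}

/-- `A` is a modular subgroup of `G` (a modular element of the subgroup lattice). -/
def IsModularSubgroup {G : Type*} [Group G] (A : Subgroup G) : Prop :=
  (∀ X Z : Subgroup G, X ≤ Z → X ⊔ (A ⊓ Z) = (X ⊔ A) ⊓ Z) ∧
  (∀ Y Z : Subgroup G, A ≤ Z → A ⊔ (Y ⊓ Z) = (A ⊔ Y) ⊓ Z)

/-- `A` is `σ`-subnormal in `G`: there is a chain `A = A₀ ≤ A₁ ≤ ⋯ ≤ Aₙ = G`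
such that each `A i` is normal in `A (i+1)` or `A (i+1) / (A i)_{A (i+1)}` is
`σ`-primary. -/
def IsSigmaSubnormal {I : Type*} (σ : I → Set ℕ) {G : Type*} [Group G]
    (A : Subgroup G) : Prop :=
  ∃ (n : ℕ) (c : Fin (n + 1) → Subgroup G),
    c 0 = A ∧ c (Fin.last n) = ⊤ ∧
    ∀ i : Fin n,
      c i.castSucc ≤ c i.succ ∧
        (((c i.castSucc).subgroupOf (c i.succ)).Normal ∨
          IsSigmaPrimary σ
            (c i.succ ⧸ ((c i.castSucc).subgroupOf (c i.succ)).normalCore))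

/-- `A` is `σ`-quasinormal in `G` if it is modular and `σ`-subnormal in `G`. -/
def IsSigmaQuasinormal {I : Type*} (σ : I → Set ℕ) {G : Type*} [Group G]
    (A : Subgroup G) : Prop :=
  IsModularSubgroup A ∧ IsSigmaSubnormal σ A

/-- `H` is a Hall `π`-subgroup of `G`: `|H|` is a `π`-number and `[G : H]` has no
prime divisors in `π`. -/
def IsHallPiSubgroup (π : Set ℕ) {G : Type*} [Group G] (H : Subgroup G) : Prop :=
  IsPiGroup π H ∧ ∀ p : ℕ, p.Prime → p ∣ H.index → p ∉ π

/-- Two subgroups permute if `AB = BA` as sets. -/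
def Permutes {G : Type*} [Group G] (A B : Subgroup G) : Prop :=
  (A : Set G) * (B : Set G) = (B : Set G) * (A : Set G)

/-- A group is `σ`-nilpotent if it is a direct product of `σ`-primary groups. -/
def IsSigmaNilpotent {I : Type*} (σ : I → Set ℕ) (X : Type*) [Group X] : Prop :=
  ∃ (n : ℕ) (H : Fin n → GrpCat.{0}),
    (∀ i, Finite (H i)) ∧ (∀ i, IsSigmaPrimary σ (H i)) ∧
      Nonempty (X ≃* ((i : Fin n) → H i))

/-- `C_G(H/K)`: the set of all `g ∈ G` such that `⁅h, g⁆ ∈ K` for all `h ∈ H`,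
realized as the preimage in `G` of the centralizer of the image of `H` in `G ⧸ K`. -/
def quotCentralizer {G : Type*} [Group G] (H K : Subgroup G) (hK : K.Normal) :
    Subgroup G :=
  haveI := hK
  Subgroup.comap (QuotientGroup.mk' K)
    (Subgroup.centralizer ((H.map (QuotientGroup.mk' K) : Subgroup (G ⧸ K)) : Set (G ⧸ K)))

/-- `H/K` is a chief factor of `G`: `K < H` are normal subgroups of `G` with no
normal subgroup of `G` strictly between them. -/
def IsChiefFactor {G : Type*} [Group G] (H K : Subgroup G) : Prop :=
  K.Normal ∧ H.Normal ∧ K < H ∧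
    ∀ L : Subgroup G, L.Normal → K ≤ L → L ≤ H → L = K ∨ L = H

/-- A factor `H/K` (with `K` normal in `G`) is `σ`-central in `G`:
there is an `i` such that both `H/K` and `G/C_G(H/K)` are `σ i`-groups
(equivalently, `(H/K) ⋊ (G/C_G(H/K))` is `σ`-primary). -/
def IsSigmaCentral {I : Type*} (σ : I → Set ℕ) {G : Type*} [Group G]
    (H K : Subgroup G) (hK : K.Normal) : Prop :=
  ∃ i, IsPiGroup (σ i) (H ⧸ K.subgroupOf H) ∧
    IsPiGroup (σ i) (G ⧸ quotCentralizer H K hK)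

/-- A normal subgroup `E` of `G` is `σ`-hypercentral in `G` if either `E = 1` or
every chief factor of `G` below `E` is `σ`-central in `G`. -/
def IsSigmaHypercentral {I : Type*} (σ : I → Set ℕ) {G : Type*} [Group G]
    (E : Subgroup G) : Prop :=
  E.Normal ∧ (E = ⊥ ∨
    ∀ H K : Subgroup G, (hc : IsChiefFactor H K) → H ≤ E →
      IsSigmaCentral σ H K hc.1)

/-- The `σ`-hypercentre `Z_σ(G)`: the product of all `σ`-hypercentral normal
subgroups of `G`. -/
def sigmaHypercentre {I : Type*} (σ : I → Set ℕ) (G : Type*) [Group G] : Subgroup G :=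
  sSup {E : Subgroup G | IsSigmaHypercentral σ E}

/-- `O_π(X)`: the largest normal `π`-subgroup of `X` (the product of all normal
`π`-subgroups). -/
def piCore (π : Set ℕ) (X : Type*) [Group X] : Subgroup X :=
  sSup {N : Subgroup X | N.Normal ∧ IsPiGroup π N}

/-- `O^π(X)`: the smallest normal subgroup of `X` whose quotient is a `π`-group. -/
def piResidual (π : Set ℕ) (X : Type*) [Group X] : Subgroup X :=
  sInf {N : Subgroup X | N.Normal ∧ IsPiGroup π (X ⧸ N)}

/-- A family of subgroups forms an internal direct product decomposition of `X`. -/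
def IsInternalDirectProduct {X : Type*} [Group X] {ι : Type*}
    (N : ι → Subgroup X) : Prop :=
  (∀ i, (N i).Normal) ∧ iSupIndep N ∧ iSup N = ⊤

/-- `X` is `π`-decomposable: `X = O_π(X) × O_{π'}(X)` (internal direct product). -/
def IsPiDecomposable (π : Set ℕ) (X : Type*) [Group X] : Prop :=
  (piCore π X).Normal ∧ (piCore (primeCompl π) X).Normal ∧
    Disjoint (piCore π X) (piCore (primeCompl π) X) ∧
      piCore π X ⊔ piCore (primeCompl π) X = ⊤

/-- `X` is `π`-special for a finite set of primes `π = {p₁, …, pₙ}`: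
`X = O_{p₁}(X) × ⋯ × O_{pₙ}(X) × O_{π'}(X)` (internal direct product). -/
def IsPiSpecial (π : Finset ℕ) (X : Type*) [Group X] : Prop :=
  IsInternalDirectProduct (fun o : Option {p : ℕ // p ∈ π} =>
    o.elim (piCore (primeCompl ↑π) X) (fun p => piCore {(p : ℕ)} X))

/-- The chain condition of Corollary 1.3: each factor is normal or the
corresponding quotient is a `π₀`-group for some `π₀ ∈ {π, π'}`. -/
def IsPiPiPrimeSubnormal (π : Set ℕ) {G : Type*} [Group G] (A : Subgroup G) : Prop :=
  ∃ (n : ℕ) (c : Fin (n + 1) → Subgroup G),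
    c 0 = A ∧ c (Fin.last n) = ⊤ ∧
    ∀ i : Fin n,
      c i.castSucc ≤ c i.succ ∧
        (((c i.castSucc).subgroupOf (c i.succ)).Normal ∨
          ∃ π₀ ∈ ({π, primeCompl π} : Set (Set ℕ)),
            IsPiGroup π₀
              (c i.succ ⧸ ((c i.castSucc).subgroupOf (c i.succ)).normalCore))

/-- The chain condition of Corollary 1.4: each factor is normal or the
corresponding quotient is a `π'`-group. -/
def IsPiPrimeSubnormal (π : Set ℕ) {G : Type*} [Group G] (A : Subgroup G) : Prop :=
  ∃ (n : ℕ) (c : Fin (n + 1) → Subgroup G),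
    c 0 = A ∧ c (Fin.last n) = ⊤ ∧
    ∀ i : Fin n,
      c i.castSucc ≤ c i.succ ∧
        (((c i.castSucc).subgroupOf (c i.succ)).Normal ∨
          IsPiGroup (primeCompl π)
            (c i.succ ⧸ ((c i.castSucc).subgroupOf (c i.succ)).normalCore))

/-- The centralizer of (the carrier of) a normal subgroup is normal. -/
theorem centralizer_normal_of_normal {G : Type*} [Group G] {N : Subgroup G}
    (hN : N.Normal) : (Subgroup.centralizer (N : Set G)).Normal := by
  constructor
  intro g hg c
  rw [Subgroup.mem_centralizer_iff] at hg ⊢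
  intro s hs
  have hs' : c⁻¹ * s * c ∈ (N : Set G) := hN.conj_mem' s hs c
  have h := hg _ hs'
  have : c * ((c⁻¹ * s * c) * g) * c⁻¹ = c * (g * (c⁻¹ * s * c)) * c⁻¹ := by rw [h]
  calc s * (c * g * c⁻¹) = c * ((c⁻¹ * s * c) * g) * c⁻¹ := by group
    _ = c * (g * (c⁻¹ * s * c)) * c⁻¹ := this
    _ = (c * g * c⁻¹) * s := by group

/-- `C_G(H/K)` is normal in `G` whenever `H` and `K` are. -/
theorem quotCentralizer_normal {G : Type*} [Group G] {H K : Subgroup G}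
    (hK : K.Normal) (hH : H.Normal) : (quotCentralizer H K hK).Normal := by
  haveI := hK
  exact (centralizer_normal_of_normal
    (hH.map (QuotientGroup.mk' K) (QuotientGroup.mk'_surjective K))).comap _

/-!
Induction on `|G|`. The top step `M` of a `σ`-subnormal chain of `A` is either normal in `G`,
or `G / M_G` is a `σ_j`-group for the core `M_G`; then `G = H M_G` if `j = i`, and `H ≤ M_G`
if `j ≠ i`. In every case `H M` is a subgroup, so `H ∩ M` is a Hall `σ_i`-subgroup of `M`, and
by induction `A (H ∩ M)` is a subgroup. Dedekind's law and the modularity of `A` then give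
`⟨A, H⟩ = H (M ∩ ⟨A, H⟩) = H ⟨A, H ∩ M⟩ = H (H ∩ M) A = H A`.
-/

section Permutes

variable {G : Type*} [Group G] {A B H M : Subgroup G}

theorem Permutes.symm (h : Permutes A B) : Permutes B A :=
  Eq.symm h

theorem permutes_of_mul_eq_coe {W : Subgroup G} (h : (A : Set G) * B = W) : Permutes A B := by
  have hinv : (B : Set G) * A = W := by
    simpa only [mul_inv_rev, inv_coe_set] using congrArg (·⁻¹) h
  rw [Permutes, h, hinv]

theorem permutes_of_le_normalizer (h : A ≤ normalizer (B : Set G)) : Permutes A B := by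
  rw [Permutes, ← coe_mul_of_left_le_normalizer_right A B h,
    ← coe_mul_of_right_le_normalizer_left B A h, sup_comm]

theorem Permutes.coe_sup_eq_mul (h : Permutes A B) : (↑(A ⊔ B) : Set G) = A * B := by
  have hmul : (A * B : Set G) * (A * B) = A * B :=
    calc (A * B : Set G) * (A * B) = A * (B * A) * B := by simp only [mul_assoc]
      _ = (A * A) * (B * B) := by rw [← h]; simp only [mul_assoc]
      _ = A * B := by rw [coe_mul_coe, coe_mul_coe]
  let P : Subgroup G :=
    { carrier := A * B
      one_mem' := ⟨1, A.one_mem, 1, B.one_mem, mul_one 1⟩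
      mul_mem' := fun hx hy => hmul ▸ Set.mul_mem_mul hx hy
      inv_mem' := fun {x} hx => by
        have : x⁻¹ ∈ ((A : Set G) * B)⁻¹ := Set.inv_mem_inv.mpr hx
        rwa [mul_inv_rev, inv_coe_set, inv_coe_set, ← h] at this }
  have hle : A ⊔ B ≤ P :=
    sup_le (fun a ha => ⟨a, ha, 1, B.one_mem, mul_one a⟩)
      (fun b hb => ⟨1, A.one_mem, b, hb, one_mul b⟩)
  exact (SetLike.coe_subset_coe.mpr hle).antisymm (Set.mul_subset_iff.mpr fun _ ha _ hb =>
    mul_mem (mem_sup_left ha) (mem_sup_right hb))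

theorem coe_mul_coe_of_le (h : B ≤ A) : (A : Set G) * B = A :=
  (Set.mul_subset_mul_left (SetLike.coe_subset_coe.mpr h)).trans_eq (coe_mul_coe A) |>.antisymm
    (Set.subset_mul_left _ B.one_mem)

theorem Permutes.inf_of_subgroupOf (h : Permutes (A.subgroupOf M) (B.subgroupOf M)) :
    Permutes (A ⊓ M) (B ⊓ M) := by
  have himg := congrArg (M.subtype '' ·) h
  unfold Permutes
  simpa only [Set.image_mul, ← coe_map, subgroupOf_map_subtype] using himg

theorem IsModularSubgroup.permutes_of_permutes_inf (hA : IsModularSubgroup A) (hAM : A ≤ M)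
    (hHM : Permutes H M) (hAHM : Permutes A (H ⊓ M)) : Permutes A H := by
  refine (permutes_of_mul_eq_coe (W := A ⊔ H) ?_).symm
  have hAH : A ⊔ H ≤ H ⊔ M := sup_le (hAM.trans le_sup_right) le_sup_left
  calc (H : Set G) * A = H * ((↑(H ⊓ M) : Set G) * A) := by
        rw [← mul_assoc, coe_mul_coe_of_le inf_le_left]
    _ = (H : Set G) * ↑(A ⊔ (H ⊓ M)) := by rw [sup_comm, hAHM.symm.coe_sup_eq_mul]
    _ = (H : Set G) * ↑(M ⊓ (A ⊔ H)) := by rw [hA.2 H M hAM, inf_comm]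
    _ = (H : Set G) * M ∩ ↑(A ⊔ H) := mul_inf_assoc H M (A ⊔ H) le_sup_right
    _ = ↑(A ⊔ H) := by rw [← hHM.coe_sup_eq_mul, Set.inter_eq_right.mpr hAH]

theorem card_mul_eq_card_mul_relIndex (H K : Subgroup G) :
    Nat.card (↑K * ↑H : Set G) = Nat.card H * H.relIndex K := by
  rw [card_mul_eq_card_subgroup_mul_card_quotient]
  congr 1
  -- orbit–stabilizer for `K` acting on `G ⧸ H` through the coset `H`
  have hsmul : ∀ k : K, k • ((1 : G) : G ⧸ H) = ((k : G) : G ⧸ H) := fun k => by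
    show (k : G) • ((1 : G) : G ⧸ H) = _
    rw [MulAction.Quotient.smul_mk, smul_eq_mul, mul_one]
  have hstab : MulAction.stabilizer K ((1 : G) : G ⧸ H) = H.subgroupOf K := by
    ext k
    rw [MulAction.mem_stabilizer_iff, hsmul, QuotientGroup.eq, mem_subgroupOf]
    simp
  have horb : MulAction.orbit K ((1 : G) : G ⧸ H) = (K : Set G).image (↑) := by
    ext x
    simp [MulAction.mem_orbit_iff, hsmul]
  rw [relIndex, ← hstab, MulAction.index_stabilizer, horb, Nat.card_coe_set_eq]

theorem Permutes.relIndex_eq_relIndex_sup [Finite G] (h : Permutes H M) :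
    H.relIndex M = H.relIndex (H ⊔ M) := by
  have hM := card_mul_eq_card_mul_relIndex H M
  have hHM := card_mul_eq_card_mul_relIndex H (H ⊔ M)
  rw [coe_mul_coe_of_le le_sup_left] at hHM
  rw [← h.symm.coe_sup_eq_mul, sup_comm] at hM
  exact Nat.eq_of_mul_eq_mul_left Nat.card_pos (hM.symm.trans hHM)

end Permutes

section Hall

variable {π ρ : Set ℕ} {X Y : Type*}

theorem IsPiGroup.of_card_dvd (h : IsPiGroup π X) (hYX : Nat.card Y ∣ Nat.card X) :
    IsPiGroup π Y :=
  fun p hp hpY => h p hp (hpY.trans hYX)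

theorem IsSigmaPrimary.of_card_dvd {I : Type*} {σ : I → Set ℕ} (h : IsSigmaPrimary σ X)
    (hYX : Nat.card Y ∣ Nat.card X) : IsSigmaPrimary σ Y :=
  h.imp fun _ hi => hi.of_card_dvd hYX

theorem IsPrimePartition.disjoint {I : Type*} {σ : I → Set ℕ} (hσ : IsPrimePartition σ)
    {i j : I} (hij : i ≠ j) : Disjoint (σ i) (σ j) :=
  Set.disjoint_left.mpr fun p hpi hpj =>
    hij ((hσ.2 p (hσ.1 i p hpi)).unique hpi hpj)

variable {G : Type*} [Group G] {H M N : Subgroup G}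

theorem IsHallPiSubgroup.subgroupOf [Finite G] (hH : IsHallPiSubgroup π H) (hHM : Permutes H M) :
    IsHallPiSubgroup π (H.subgroupOf M) := by
  have hcard : Nat.card (H.subgroupOf M) ∣ Nat.card H := by
    rw [← card_map_of_injective M.subtype_injective, subgroupOf_map_subtype]
    exact card_dvd_of_le inf_le_left
  refine ⟨hH.1.of_card_dvd hcard, fun p hp hpM => hH.2 p hp (hpM.trans ?_)⟩
  rw [← relIndex, hHM.relIndex_eq_relIndex_sup]
  exact relIndex_dvd_index_of_le le_sup_left

theorem IsHallPiSubgroup.sup_eq_top (hH : IsHallPiSubgroup π H)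
    (hN : IsPiGroup π (G ⧸ N)) : H ⊔ N = ⊤ := by
  rw [← index_eq_one]
  by_contra hne
  obtain ⟨p, hp, hpd⟩ := Nat.exists_prime_and_dvd hne
  exact hH.2 p hp (hpd.trans (index_dvd_of_le le_sup_left))
    (hN p hp (index_eq_card N ▸ hpd.trans (index_dvd_of_le le_sup_right)))

theorem IsPiGroup.le_of_isPiGroup_quotient [N.Normal] (hH : IsPiGroup π H)
    (hN : IsPiGroup ρ (G ⧸ N)) (hπρ : Disjoint π ρ) : H ≤ N := by
  suffices Nat.card (H.map (QuotientGroup.mk' N)) = 1 by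
    rwa [card_eq_one, Subgroup.map_eq_bot_iff, QuotientGroup.ker_mk'] at this
  by_contra hne
  obtain ⟨p, hp, hpd⟩ := Nat.exists_prime_and_dvd hne
  exact Set.disjoint_left.mp hπρ (hH p hp (hpd.trans (card_map_dvd H _)))
    (hN p hp (hpd.trans (card_subgroup_dvd_card _)))

theorem IsHallPiSubgroup.permutes_of_normal_or_isSigmaPrimary {I : Type*} {σ : I → Set ℕ}
    (hσ : IsPrimePartition σ) {i : I} (hH : IsHallPiSubgroup (σ i) H)
    (hM : M.Normal ∨ IsSigmaPrimary σ (G ⧸ M.normalCore)) : Permutes H M := by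
  rcases hM with hM | ⟨j, hj⟩
  · exact permutes_of_le_normalizer (le_top.trans_eq (normalizer_eq_top_iff.mpr hM).symm)
  rcases eq_or_ne i j with rfl | hij
  · refine permutes_of_mul_eq_coe (W := ⊤) (Set.eq_univ_of_univ_subset ?_)
    rw [← coe_top, ← hH.sup_eq_top hj, mul_normal]
    exact Set.mul_subset_mul_left (SetLike.coe_subset_coe.mpr (normalCore_le M))
  · have hHM : H ≤ M :=
      (hH.1.le_of_isPiGroup_quotient hj (hσ.disjoint hij)).trans (normalCore_le M)
    exact permutes_of_le_normalizer (hHM.trans le_normalizer)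

end Hall

theorem Fin.exists_castSucc_ne_and_succ_eq {α : Type*} {n : ℕ} {c : Fin (n + 1) → α} {x : α}
    (h0 : c 0 ≠ x) (hlast : c (Fin.last n) = x) :
    ∃ k : Fin n, c k.castSucc ≠ x ∧ c k.succ = x := by
  by_contra! h
  exact Fin.induction (motive := fun k => c k ≠ x) h0 h (Fin.last n) hlast

theorem Subgroup.card_quotient_normalCore_comap_dvd {P Q : Type*} [Group P] [Group Q]
    (f : P →* Q) (K : Subgroup Q) :
    Nat.card (P ⧸ (K.comap f).normalCore) ∣ Nat.card (Q ⧸ K.normalCore) := by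
  rw [← index_eq_card, ← index_eq_card]
  calc (K.comap f).normalCore.index ∣ (K.normalCore.comap f).index :=
        index_dvd_of_le (normal_le_normalCore.mpr (comap_mono (normalCore_le K)))
    _ = K.normalCore.relIndex f.range := index_comap _ _
    _ ∣ K.normalCore.index := relIndex_dvd_index_of_normal _ _

section SigmaSubnormal

variable {I : Type*} {σ : I → Set ℕ}

theorem comap_normal_or_isSigmaPrimary {P Q : Type*} [Group P] [Group Q] (f : P →* Q)
    {K : Subgroup Q} (h : K.Normal ∨ IsSigmaPrimary σ (Q ⧸ K.normalCore)) :
    (K.comap f).Normal ∨ IsSigmaPrimary σ (P ⧸ (K.comap f).normalCore) :=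
  h.imp (·.comap f) (·.of_card_dvd (card_quotient_normalCore_comap_dvd f K))

variable {G : Type*} [Group G] {A : Subgroup G}

theorem IsSigmaSubnormal.subgroupOf (h : IsSigmaSubnormal σ A) (Z : Subgroup G) :
    IsSigmaSubnormal σ (A.subgroupOf Z) := by
  obtain ⟨n, c, h0, hlast, hstep⟩ := h
  refine ⟨n, fun k => (c k).subgroupOf Z, congrArg (·.subgroupOf Z) h0,
    by simp only [hlast, top_subgroupOf], fun k => ?_⟩
  obtain ⟨hle, hk⟩ := hstep k
  let f : (c k.succ).subgroupOf Z →* c k.succ :=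
    (Z.subtype.comp ((c k.succ).subgroupOf Z).subtype).codRestrict _ fun x => x.2
  exact ⟨subgroupOf_mono Z hle, comap_normal_or_isSigmaPrimary f hk⟩

theorem IsSigmaSubnormal.exists_le_ne_top (h : IsSigmaSubnormal σ A) (hA : A ≠ ⊤) :
    ∃ M : Subgroup G, A ≤ M ∧ M ≠ ⊤ ∧ (M.Normal ∨ IsSigmaPrimary σ (G ⧸ M.normalCore)) := by
  obtain ⟨n, c, h0, hlast, hstep⟩ := h
  obtain ⟨k, hk, hk_succ⟩ := Fin.exists_castSucc_ne_and_succ_eq (h0 ▸ hA) hlast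
  have hmono : Monotone c := Fin.monotone_iff_le_succ.mpr fun k => (hstep k).1
  have hstep_top := (hstep k).2
  rw [hk_succ] at hstep_top
  exact ⟨_, h0 ▸ hmono (Fin.zero_le _), hk,
    comap_normal_or_isSigmaPrimary (topEquiv (G := G)).symm.toMonoidHom hstep_top⟩

theorem IsModularSubgroup.subgroupOf (hA : IsModularSubgroup A) {Z : Subgroup G} (hAZ : A ≤ Z) :
    IsModularSubgroup (A.subgroupOf Z) := by
  have hinj : Function.Injective Z.subtype := Z.subtype_injective
  constructor
  · intro X Y hXY
    apply map_injective hinj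
    simp only [Subgroup.map_sup, map_inf _ _ _ hinj, subgroupOf_map_subtype, inf_of_le_left hAZ]
    exact hA.1 _ _ (map_mono hXY)
  · intro X Y hAY
    apply map_injective hinj
    simp only [Subgroup.map_sup, map_inf _ _ _ hinj, subgroupOf_map_subtype, inf_of_le_left hAZ]
    apply hA.2
    simpa only [subgroupOf_map_subtype, inf_of_le_left hAZ] using map_mono (f := Z.subtype) hAY

end SigmaSubnormal

theorem IsSigmaQuasinormal.permutes_of_isHallPiSubgroup {I : Type*} {σ : I → Set ℕ}
    (hσ : IsPrimePartition σ) {G : Type*} [Group G] [Finite G] {A H : Subgroup G}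
    (hA : IsSigmaQuasinormal σ A) {i : I} (hH : IsHallPiSubgroup (σ i) H) : Permutes A H := by
  induction hn : Nat.card G using Nat.strong_induction_on generalizing G with
  | _ n ih =>
    obtain ⟨hmod, hsub⟩ := hA
    rcases eq_or_ne A ⊤ with rfl | hA_top
    · exact (permutes_of_le_normalizer le_normalizer_of_normal).symm
    obtain ⟨M, hAM, hM_top, hM⟩ := hsub.exists_le_ne_top hA_top
    have hHM : Permutes H M := hH.permutes_of_normal_or_isSigmaPrimary hσ hM
    have hcard : Nat.card M < n :=
      hn ▸ (card_le_card_group M).lt_of_ne (mt (eq_top_of_card_eq M) hM_top)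
    have hAHM : Permutes (A ⊓ M) (H ⊓ M) :=
      (ih _ hcard ⟨hmod.subgroupOf hAM, hsub.subgroupOf M⟩ (hH.subgroupOf hHM)
        rfl).inf_of_subgroupOf
    rw [inf_of_le_left hAM] at hAHM
    exact hmod.permutes_of_permutes_inf hAM hHM hAHM

theorem sigmaQuasinormal_permutes_hall_general {I : Type*} (σ : I → Set ℕ)
    (hσ : IsPrimePartition σ) {G : Type*} [Group G] [Finite G] (A : Subgroup G)
    (hA : IsSigmaQuasinormal σ A) (i : I) :
    ∀ H : Subgroup G, IsHallPiSubgroup (σ i) H → Permutes A H :=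
  fun _ hH => hA.permutes_of_isHallPiSubgroup hσ hH

/-- A `σ`-quasinormal subgroup permutes with every Hall
`σ i`-subgroup, provided `G` possesses one. -/
theorem sigmaQuasinormal_permutes_hall {I : Type*} (σ : I → Set ℕ)
    (hσ : IsPrimePartition σ) {G : Type*} [Group G] [Finite G] (A : Subgroup G)
    (hA : IsSigmaQuasinormal σ A) (i : I)
    (hex : ∃ H : Subgroup G, IsHallPiSubgroup (σ i) H) :
    ∀ H : Subgroup G, IsHallPiSubgroup (σ i) H → Permutes A H :=
  sigmaQuasinormal_permutes_hall_general σ hσ A hA i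
end

section
/- Let A be a σ-quasinormal subgroup of a finite group G. Then A is σ-seminormal in G; that is, every element x ∈ G with σ(|x|) ∩ σ(A) = ∅ normalizes A. -/
open Subgroup Pointwise

/-!
Along a `σ`-subnormal chain `A = A₀ ≤ ⋯ ≤ Aₙ = G` one shows by induction that every `x ∈ Aₖ`
with `σ(|x|) ∩ σ(A) = ∅` normalizes `A`; such `x` has order coprime to `|A|`. At a step `M ≤ T`
one finds `A ≤ D ≤ M` normalized by `x`: `D = M` if `M ⊴ T`; otherwise `T / M_T` is a
`σᵢ`-group, and either `x ∈ M_T` or `i ∉ σ(A)`, whence `A ≤ M_T =: D`. Modularity gives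
`E := (A ⊔ ⟨x⟩) ⊓ D = A ⊔ (⟨x⟩ ⊓ D)`, so `A ⊴ E` by induction, and `x` normalizes `E`. Then
`P := A ⊔ Aˣ ≤ E` has order dividing `|A|²`, so `⟨x⟩ ⊓ P = 1`, and modularity again gives
`A = A ⊔ (⟨x⟩ ⊓ P) = (A ⊔ ⟨x⟩) ⊓ P = P`, i.e. `Aˣ ≤ A`.
-/

section GroupTheory

variable {G : Type*} [Group G]

theorem Subgroup.card_sup_dvd_of_le_normalizer {H N : Subgroup G}
    (hH : H ≤ normalizer (N : Set G)) :
    Nat.card ↥(H ⊔ N) ∣ Nat.card H * Nat.card N := by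
  have := normal_subgroupOf_of_le_normalizer hH
  have := normal_subgroupOf_sup_of_le_normalizer hH
  have hrel : N.relIndex (H ⊔ N) = N.relIndex H :=
    (Nat.card_congr (QuotientGroup.quotientInfEquivProdNormalizerQuotient H N hH).toEquiv).symm
  have hcard := relIndex_mul_relIndex ⊥ N (H ⊔ N) bot_le le_sup_right
  rw [relIndex_bot_left, relIndex_bot_left, hrel] at hcard
  rw [← hcard, mul_comm (Nat.card H)]
  exact mul_dvd_mul_left _ (relIndex_dvd_card N H)

theorem Subgroup.mem_normalizer_of_map_conj_le [Finite G] {A : Subgroup G} {x : G}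
    (h : A.map (MulAut.conj x).toMonoidHom ≤ A) : x ∈ normalizer (A : Set G) :=
  mem_normalizer_iff_map_conj_eq.mpr <| eq_of_le_of_card_ge h
    (card_map_of_injective (MulAut.conj x).injective).ge

theorem Subgroup.mem_normalizer_map_subtype {T : Subgroup G} (N : Subgroup T) [N.Normal]
    {x : G} (hx : x ∈ T) : x ∈ normalizer ((N.map T.subtype : Subgroup G) : Set G) :=
  le_normalizer_map (H := N) T.subtype (mem_map_of_mem _ (by simp [normalizer_eq_top]) :
    T.subtype ⟨x, hx⟩ ∈ _)

theorem IsModularSubgroup.mem_normalizer_of_coprime [Finite G] {A D : Subgroup G} {x : G}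
    (hA : IsModularSubgroup A) (hAD : A ≤ D) (hxD : x ∈ normalizer (D : Set G))
    (hcop : (orderOf x).Coprime (Nat.card A))
    (hXD : zpowers x ⊓ D ≤ normalizer (A : Set G)) : x ∈ normalizer (A : Set G) := by
  set X := zpowers x
  set E := (A ⊔ X) ⊓ D
  have hE : A ⊔ (X ⊓ D) = E := hA.2 X D hAD
  have hAE : A ≤ E := by rw [← hE]; exact le_sup_left
  have hEA : E ≤ normalizer (A : Set G) := by rw [← hE]; exact sup_le le_normalizer hXD
  have hxE : x ∈ normalizer (E : Set G) :=
    inf_normalizer_le_normalizer_inf ⟨le_normalizer (mem_sup_right (mem_zpowers x)), hxD⟩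
  set B := A.map (MulAut.conj x).toMonoidHom
  have hBE : B ≤ E :=
    (map_mono hAE).trans (mem_normalizer_iff_map_conj_eq.mp hxE).le
  have hP : Nat.card ↥(B ⊔ A) ∣ Nat.card A * Nat.card A := by
    have := card_sup_dvd_of_le_normalizer (hBE.trans hEA)
    rwa [card_map_of_injective (MulAut.conj x).injective] at this
  have hXP : X ⊓ (B ⊔ A) = ⊥ := by
    refine disjoint_iff.mp (disjoint_of_coprime_natCard ?_)
    rw [Nat.card_zpowers]
    exact (hcop.mul_right hcop).coprime_dvd_right hP
  have hmod := hA.2 X (B ⊔ A) le_sup_right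
  rw [hXP, sup_bot_eq, inf_eq_right.mpr ((sup_le hBE hAE).trans inf_le_left)] at hmod
  exact mem_normalizer_of_map_conj_le (le_sup_left.trans hmod.ge)

end GroupTheory

section Sigma

variable {I : Type*} {σ : I → Set ℕ}

theorem sigmaOf_mono {m n : ℕ} (h : m ∣ n) : sigmaOf σ m ⊆ sigmaOf σ n :=
  fun _ ⟨p, hp, hpi, hpm⟩ => ⟨p, hp, hpi, hpm.trans h⟩

theorem IsPrimePartition.coprime_of_sigmaOf_inter_eq_empty (hσ : IsPrimePartition σ) {m n : ℕ}
    (h : sigmaOf σ m ∩ sigmaOf σ n = ∅) : m.Coprime n :=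
  Nat.coprime_of_dvd fun p hp hpm hpn =>
    have ⟨_, hi⟩ := (hσ.2 p hp).exists
    h.subset ⟨⟨p, hp, hi, hpm⟩, ⟨p, hp, hi, hpn⟩⟩

theorem mem_sigmaOf_orderOf_of_notMem {i : I} {H : Type*} [Group H] {N : Subgroup H} [N.Normal]
    (hN : IsPiGroup (σ i) (H ⧸ N)) {h : H} (hh : h ∉ N) : i ∈ sigmaOf σ (orderOf h) := by
  have hne : orderOf (h : H ⧸ N) ≠ 1 := by
    rwa [Ne, orderOf_eq_one_iff, QuotientGroup.eq_one_iff]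
  obtain ⟨p, hp, hpd⟩ := Nat.exists_prime_and_dvd hne
  exact ⟨p, hp, hN p hp (hpd.trans (orderOf_dvd_natCard _)),
    hpd.trans (orderOf_map_dvd (QuotientGroup.mk' N) h)⟩

variable {G : Type*} [Group G]

/-- `A` is `σ`-seminormal in `G` iff `IsSigmaSeminormalIn σ A ⊤`. -/
def IsSigmaSeminormalIn (σ : I → Set ℕ) (A T : Subgroup G) : Prop :=
  ∀ x ∈ T, sigmaOf σ (orderOf x) ∩ sigmaOf σ (Nat.card A) = ∅ → x ∈ normalizer (A : Set G)

theorem isSigmaSeminormalIn_self (A : Subgroup G) : IsSigmaSeminormalIn σ A A :=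
  fun _ hx _ => le_normalizer hx

theorem IsSigmaSeminormalIn.of_step [Finite G] (hσ : IsPrimePartition σ) {A M T : Subgroup G}
    (hA : IsModularSubgroup A) (hAM : A ≤ M) (hMT : M ≤ T)
    (hstep : (M.subgroupOf T).Normal ∨ IsSigmaPrimary σ (T ⧸ (M.subgroupOf T).normalCore))
    (hM : IsSigmaSeminormalIn σ A M) : IsSigmaSeminormalIn σ A T := by
  intro x hxT hx
  have reduce : ∀ D : Subgroup G, A ≤ D → D ≤ M → x ∈ normalizer (D : Set G) →
      x ∈ normalizer (A : Set G) := fun D hAD hDM hxD =>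
    hA.mem_normalizer_of_coprime hAD hxD (hσ.coprime_of_sigmaOf_inter_eq_empty hx) fun y hy =>
      hM y (hDM hy.2) (Set.subset_eq_empty
        (Set.inter_subset_inter_left _ (sigmaOf_mono (orderOf_dvd_of_mem_zpowers hy.1))) hx)
  rcases hstep with hnormal | ⟨i, hi⟩
  · exact reduce M hAM le_rfl (le_normalizer_of_normal_subgroupOf hMT hxT)
  · set core := (M.subgroupOf T).normalCore
    have hDM : core.map T.subtype ≤ M := map_le_iff_le_comap.mpr fun y hy =>
      mem_subgroupOf.mp (normalCore_le _ hy)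
    by_cases hxcore : (⟨x, hxT⟩ : T) ∈ core
    · exact hM x (hDM (mem_map_of_mem _ hxcore)) hx
    have hiA : i ∉ sigmaOf σ (Nat.card A) := fun hiA =>
      hx.subset ⟨by simpa using mem_sigmaOf_orderOf_of_notMem hi hxcore, hiA⟩
    refine reduce _ (fun a ha => ?_) hDM (mem_normalizer_map_subtype core hxT)
    by_contra hacore
    refine hiA (sigmaOf_mono (A.orderOf_dvd_natCard ha) ?_)
    simpa using mem_sigmaOf_orderOf_of_notMem hi (h := ⟨a, hMT (hAM ha)⟩)
      fun h => hacore (mem_map_of_mem _ h)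

end Sigma

/-- A `σ`-quasinormal subgroup `A` of `G` is `σ`-seminormal in `G`:
every `x ∈ G` with `σ(|x|) ∩ σ(A) = ∅` normalizes `A`. -/
theorem sigmaQuasinormal_sigmaSeminormal {I : Type*} (σ : I → Set ℕ)
    (hσ : IsPrimePartition σ) {G : Type*} [Group G] [Finite G] (A : Subgroup G)
    (hA : IsSigmaQuasinormal σ A) :
    ∀ x : G, sigmaOf σ (orderOf x) ∩ sigmaOf σ (Nat.card A) = ∅ →
      x ∈ Subgroup.normalizer (A : Set G) := by
  obtain ⟨hmod, n, c, h0, hlast, hstep⟩ := hA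
  have hchain : ∀ k : Fin (n + 1), A ≤ c k ∧ IsSigmaSeminormalIn σ A (c k) := by
    intro k
    induction k using Fin.induction with
    | zero => rw [h0]; exact ⟨le_rfl, isSigmaSeminormalIn_self A⟩
    | succ k ih =>
      exact ⟨ih.1.trans (hstep k).1, ih.2.of_step hσ hmod ih.1 (hstep k).1 (hstep k).2⟩
  intro x
  exact (hchain (Fin.last n)).2 x (hlast ▸ mem_top x)
end

section
/- Let π = {p_1, …, p_n} be a set of primes with complement π′, and let A be a modular subgroup of a finite group G for which there is a chain of subgroups A = A_0 ≤ A_1 ≤ ⋯ ≤ A_n = G such that for each i = 1,…,n either A_{i-1} is normal in A_i or A_i/(A_{i-1})_{A_i} is a π′-group. Then A permutes with every Sylow p-subgroup of G for all p ∈ π, and if G possesses a Hall π′-subgroup, then A permutes with each Hall π′-subgroup of G. -/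
open Subgroup Pointwise

/-!
We prove more generally that `A` permutes with every Hall `σ`-subgroup `X` of the top of the
chain whenever `π' ⊆ σ` or `π' ∩ σ = ∅` (`σ = {p}` with `p ∈ π`, and `σ = π'`), by induction along
the chain. Let `B ≤ T` be the last step.

If `B ⊴ T`, then `N = B ∩ ⟨A, X⟩` is normalized by `X` and `X ∩ N` is a Hall `σ`-subgroup of `N`;
by induction `A(X ∩ N)` is a subgroup, equal to `N` by modularity, so
`AX = A(X ∩ N)X = NX = XN = XA`.

If `T / D` is a `π'`-group for the core `D` of `B` in `T`, then for `π' ∩ σ = ∅` we get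
`X ≤ D ≤ B` and induction applies directly, while for `π' ⊆ σ` the indices of `D` and `X` are
coprime, so `T = DX`. In the latter case `X ∩ B` is a Hall
`σ`-subgroup of `B`, and `U = A(X ∩ B) = ⟨A, X⟩ ∩ B` by modularity; `U` and `X` have coprime indices
in `⟨A, X⟩`, so `UX = ⟨A, X⟩ = XU`, and `AX = XA` follows as before.
-/

open Relation

def IsPiNumber (π : Set ℕ) (n : ℕ) : Prop :=
  ∀ p : ℕ, p.Prime → p ∣ n → p ∈ π

namespace IsPiNumber

variable {π ρ : Set ℕ} {m n : ℕ}

theorem of_dvd (h : IsPiNumber π n) (hmn : m ∣ n) : IsPiNumber π m :=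
  fun p hp hpm => h p hp (hpm.trans hmn)

theorem mono (h : IsPiNumber π n) (hπρ : π ⊆ ρ) : IsPiNumber ρ n :=
  fun p hp hpn => hπρ (h p hp hpn)

theorem eq_one_of_compl (h : IsPiNumber π n) (hc : IsPiNumber πᶜ n) : n = 1 :=
  Nat.eq_one_iff_not_exists_prime_dvd.2 fun p hp hpn => hc p hp hpn (h p hp hpn)

theorem coprime (hm : IsPiNumber π m) (hn : IsPiNumber πᶜ n) : m.Coprime n :=
  (hm.of_dvd (Nat.gcd_dvd_left m n)).eq_one_of_compl (hn.of_dvd (Nat.gcd_dvd_right m n))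

end IsPiNumber

namespace Subgroup

variable {G : Type*} [Group G] {D K T U V X Y : Subgroup G}

theorem coe_mul_eq_right_of_le (h : Y ≤ X) : (Y : Set G) * X = X := by
  rw [← coe_mul_of_left_le_normalizer_right Y X (h.trans le_normalizer), sup_eq_right.2 h]

theorem coe_mul_eq_left_of_le (h : Y ≤ X) : (X : Set G) * Y = X := by
  rw [← coe_mul_of_right_le_normalizer_left X Y (h.trans le_normalizer), sup_eq_left.2 h]

theorem coe_sup_eq_mul_of_mul_comm (h : (U : Set G) * V = V * U) :
    ((U ⊔ V : Subgroup G) : Set G) = U * V := by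
  let S : Subgroup G :=
    { carrier := U * V
      one_mem' := ⟨1, U.one_mem, 1, V.one_mem, mul_one 1⟩
      mul_mem' := fun {x y} hx hy => by
        have hS : (U : Set G) * V * (U * V) = U * V := by
          rw [mul_assoc, ← mul_assoc (V : Set G), ← h, mul_assoc, coe_mul_coe, ← mul_assoc,
            coe_mul_coe]
        exact hS ▸ Set.mul_mem_mul hx hy
      inv_mem' := fun {x} hx => by
        have hS : ((U : Set G) * V)⁻¹ = U * V := by
          rw [mul_inv_rev, inv_coe_set, inv_coe_set, h]
        exact hS ▸ Set.inv_mem_inv.2 hx }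
  have hUV : U ⊔ V ≤ S := sup_le (fun u hu => ⟨u, hu, 1, V.one_mem, mul_one u⟩)
    fun v hv => ⟨1, U.one_mem, v, hv, one_mul v⟩
  exact Set.Subset.antisymm hUV
    (Set.mul_subset_iff.2 fun u hu v hv => mul_mem (mem_sup_left hu) (mem_sup_right hv))

theorem surjective_quotientSubgroupOfEmbeddingOfLE_iff (hUT : U ≤ T) (hVT : V ≤ T) :
    Function.Surjective (quotientSubgroupOfEmbeddingOfLE V hUT) ↔ (U : Set G) * V = T := by
  constructor
  · intro hsurj
    refine Set.Subset.antisymm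
      (Set.mul_subset_iff.2 fun u hu v hv => T.mul_mem (hUT hu) (hVT hv)) fun t ht => ?_
    obtain ⟨q, hq⟩ := hsurj (QuotientGroup.mk ⟨t, ht⟩)
    induction q using QuotientGroup.induction_on with | H u => ?_
    rw [quotientSubgroupOfEmbeddingOfLE_apply_mk, QuotientGroup.eq, mem_subgroupOf] at hq
    exact ⟨u, u.2, _, hq, mul_inv_cancel_left _ _⟩
  · intro hUV q
    induction q using QuotientGroup.induction_on with | H t => ?_
    obtain ⟨u, hu, v, hv, huv⟩ : (t : G) ∈ (U : Set G) * V := hUV ▸ t.2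
    refine ⟨QuotientGroup.mk ⟨u, hu⟩, ?_⟩
    rw [quotientSubgroupOfEmbeddingOfLE_apply_mk, QuotientGroup.eq, mem_subgroupOf]
    simpa [← huv] using hv

variable [Finite G]

theorem relIndex_eq_relIndex_iff_coe_mul_eq (hUT : U ≤ T) (hVT : V ≤ T) :
    V.relIndex U = V.relIndex T ↔ (U : Set G) * V = T := by
  rw [← surjective_quotientSubgroupOfEmbeddingOfLE_iff hUT hVT]
  set f := quotientSubgroupOfEmbeddingOfLE V hUT
  constructor
  · exact fun h => (f.injective.bijective_of_nat_card_le h.ge).2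
  · exact fun h => Nat.card_congr (Equiv.ofBijective f ⟨f.injective, h⟩)

theorem coe_mul_eq_of_coprime_relIndex (hUT : U ≤ T) (hVT : V ≤ T)
    (h : (U.relIndex T).Coprime (V.relIndex T)) : (U : Set G) * V = T := by
  have hprod : V.relIndex U * U.relIndex T = (V ⊓ U).relIndex T := by
    rw [← relIndex_inf_mul_relIndex, inf_of_le_left hUT]
  refine (relIndex_eq_relIndex_iff_coe_mul_eq hUT hVT).1 (le_antisymm
    (relIndex_le_of_le_right hUT index_ne_zero_of_finite)
    (Nat.le_of_dvd (Nat.pos_of_ne_zero index_ne_zero_of_finite) ?_))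
  exact h.symm.dvd_of_dvd_mul_right (hprod ▸ relIndex_dvd_of_le_left T inf_le_left)

theorem relIndex_dvd_relIndex_of_le_normalizer (hKT : K ≤ T) (hDT : D ≤ T)
    (hK : K ≤ normalizer D) : D.relIndex K ∣ D.relIndex T := by
  have hKD : D.relIndex K = D.relIndex (K ⊔ D) :=
    (relIndex_eq_relIndex_iff_coe_mul_eq le_sup_left le_sup_right).2
      (coe_mul_of_left_le_normalizer_right K D hK).symm
  exact hKD ▸ Dvd.intro _ (relIndex_mul_relIndex D (K ⊔ D) T le_sup_right (sup_le hKT hDT))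

end Subgroup

section Permutability

variable {G : Type*} [Group G] {A B D T X Y : Subgroup G} {ρ σ : Set ℕ}

structure IsHallIn (σ : Set ℕ) (X T : Subgroup G) : Prop where
  le : X ≤ T
  card : IsPiNumber σ (Nat.card X)
  relIndex : IsPiNumber σᶜ (X.relIndex T)

theorem permutes_of_le (h : X ≤ A) : Permutes A X := by
  rw [Permutes, coe_mul_eq_left_of_le h, coe_mul_eq_right_of_le h]

theorem permutes_of_permutes_sup (hYX : Y ≤ X) (hAY : Permutes A Y)
    (h : Permutes (A ⊔ Y) X) : Permutes A X := by
  have hAY' : (A : Set G) * Y = (A ⊔ Y : Subgroup G) := (coe_sup_eq_mul_of_mul_comm hAY).symm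
  have hYA : (Y : Set G) * A = (A ⊔ Y : Subgroup G) := hAY ▸ hAY'
  calc (A : Set G) * X = A * (Y * X) := by rw [coe_mul_eq_right_of_le hYX]
    _ = (A ⊔ Y : Subgroup G) * X := by rw [← mul_assoc, hAY']
    _ = X * (A ⊔ Y : Subgroup G) := h
    _ = X * (Y * A) := by rw [hYA]
    _ = X * A := by rw [← mul_assoc, coe_mul_eq_left_of_le hYX]

theorem IsHallIn.of_le (hX : IsHallIn σ X T) (hXB : X ≤ B) (hBT : B ≤ T) : IsHallIn σ X B :=
  ⟨hXB, hX.card, hX.relIndex.of_dvd (Dvd.intro _ (relIndex_mul_relIndex X B T hXB hBT))⟩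

variable [Finite G]

namespace IsHallIn

theorem inf_of_coe_mul_eq (hX : IsHallIn σ X T) (hBT : B ≤ T) (hBX : (B : Set G) * X = T) :
    IsHallIn σ (X ⊓ B) B := by
  refine ⟨inf_le_right, hX.card.of_dvd (card_dvd_of_le inf_le_left), ?_⟩
  rw [inf_relIndex_right, (relIndex_eq_relIndex_iff_coe_mul_eq hBT hX.le).2 hBX]
  exact hX.relIndex

theorem le_of_le_normalizer (hX : IsHallIn σ X T) (hDT : D ≤ T) (hT : T ≤ normalizer D)
    (hD : IsPiNumber σᶜ (D.relIndex T)) : X ≤ D := by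
  have hcard : D.relIndex X ∣ Nat.card X := relIndex_dvd_card D X
  have hindex : D.relIndex X ∣ D.relIndex T :=
    relIndex_dvd_relIndex_of_le_normalizer hX.le hDT (hX.le.trans hT)
  exact relIndex_eq_one.1 ((hX.card.of_dvd hcard).eq_one_of_compl (hD.of_dvd hindex))

end IsHallIn

theorem permutes_of_normal_step
    (hmod : ∀ Y Z : Subgroup G, A ≤ Z → A ⊔ (Y ⊓ Z) = (A ⊔ Y) ⊓ Z)
    (hAB : A ≤ B) (hBT : B ≤ T) (hT : T ≤ normalizer B) (hX : IsHallIn σ X T)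
    (ih : ∀ Y, IsHallIn σ Y (B ⊓ (A ⊔ X)) → Permutes A Y) : Permutes A X := by
  set N := B ⊓ (A ⊔ X)
  have hXN : X ≤ normalizer N :=
    (le_inf (hX.le.trans hT) (le_sup_right.trans le_normalizer)).trans
      inf_normalizer_le_normalizer_inf
  have hNXT : N ⊔ X ≤ T := sup_le (inf_le_left.trans hBT) hX.le
  have hY : IsHallIn σ (X ⊓ N) N := (hX.of_le le_sup_right hNXT).inf_of_coe_mul_eq le_sup_left
    (coe_mul_of_right_le_normalizer_left N X hXN).symm
  have hN : A ⊔ (X ⊓ N) = N := by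
    rw [hmod X N (le_inf hAB le_sup_left)]
    exact inf_eq_right.2 inf_le_right
  have hNX : Permutes N X := (set_mul_normalizer_comm (X : Set G) N hXN).symm
  exact permutes_of_permutes_sup inf_le_left (ih _ hY) (by rwa [hN])

theorem permutes_of_coe_mul_eq
    (hmod : ∀ Y Z : Subgroup G, A ≤ Z → A ⊔ (Y ⊓ Z) = (A ⊔ Y) ⊓ Z)
    (hAB : A ≤ B) (hBT : B ≤ T) (hDB : D ≤ B) (hT : T ≤ normalizer D)
    (hD : IsPiNumber σ (D.relIndex T)) (hX : IsHallIn σ X T) (hDX : (D : Set G) * X = T)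
    (ih : ∀ Y, IsHallIn σ Y B → Permutes A Y) : Permutes A X := by
  have hBX : (B : Set G) * X = T := Set.Subset.antisymm
    (Set.mul_subset_iff.2 fun b hb x hx => T.mul_mem (hBT hb) (hX.le hx))
    (hDX ▸ Set.mul_subset_mul_right hDB)
  set K := A ⊔ X
  have hU : A ⊔ (X ⊓ B) = K ⊓ B := hmod X B hAB
  have hKT : K ≤ T := sup_le (hAB.trans hBT) hX.le
  have hUK : A ⊔ (X ⊓ B) ≤ K := hU ▸ inf_le_left
  have hUindex : IsPiNumber σ ((A ⊔ (X ⊓ B)).relIndex K) := by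
    have hDU : D ⊓ K ≤ A ⊔ (X ⊓ B) := hU ▸ le_inf inf_le_right (inf_le_left.trans hDB)
    refine hD.of_dvd ((relIndex_dvd_of_le_left K hDU).trans ?_)
    rw [inf_relIndex_right]
    exact relIndex_dvd_relIndex_of_le_normalizer hKT (hDB.trans hBT) (hKT.trans hT)
  have hXK : IsHallIn σ X K := hX.of_le le_sup_right hKT
  have hcop := hUindex.coprime hXK.relIndex
  refine permutes_of_permutes_sup inf_le_left (ih _ (hX.inf_of_coe_mul_eq hBT hBX)) ?_
  rw [Permutes, coe_mul_eq_of_coprime_relIndex hUK hXK.le hcop,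
    coe_mul_eq_of_coprime_relIndex hXK.le hUK hcop.symm]

theorem permutes_of_core_step
    (hmod : ∀ Y Z : Subgroup G, A ≤ Z → A ⊔ (Y ⊓ Z) = (A ⊔ Y) ⊓ Z)
    (hρσ : ρ ⊆ σ ∨ ρ ⊆ σᶜ) (hAB : A ≤ B) (hBT : B ≤ T) (hDB : D ≤ B) (hT : T ≤ normalizer D)
    (hD : IsPiNumber ρ (D.relIndex T)) (hX : IsHallIn σ X T)
    (ih : ∀ Y, IsHallIn σ Y B → Permutes A Y) : Permutes A X := by
  rcases hρσ with hρσ | hρσ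
  · have hDX := coe_mul_eq_of_coprime_relIndex (hDB.trans hBT) hX.le
      ((hD.mono hρσ).coprime hX.relIndex)
    exact permutes_of_coe_mul_eq hmod hAB hBT hDB hT (hD.mono hρσ) hX hDX ih
  · have hXD : X ≤ D := hX.le_of_le_normalizer (hDB.trans hBT) hT (hD.mono hρσ)
    exact ih X (hX.of_le (hXD.trans hDB) hBT)

end Permutability

section Chains

variable {G : Type*} [Group G] {A B T : Subgroup G} {ρ : Set ℕ}

/-- The paper's condition on `T / B_T` is stated for an arbitrary `D ≤ B` normalized by `T`;
the core `B_T` is the largest such `D`. -/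
def SubnormalStep (ρ : Set ℕ) (B T : Subgroup G) : Prop :=
  B ≤ T ∧ (T ≤ normalizer B ∨ ∃ D ≤ B, T ≤ normalizer D ∧ IsPiNumber ρ (D.relIndex T))

theorem subnormalStep_of_normalCore (hBT : B ≤ T)
    (h : (B.subgroupOf T).Normal ∨ IsPiGroup ρ (T ⧸ (B.subgroupOf T).normalCore)) :
    SubnormalStep ρ B T := by
  refine ⟨hBT, h.imp (normal_subgroupOf_iff_le_normalizer hBT).1 fun hρ => ?_⟩
  set C := (B.subgroupOf T).normalCore
  have hC : (C.map T.subtype).subgroupOf T = C :=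
    comap_map_eq_self_of_injective T.subtype_injective C
  have hCB : C.map T.subtype ≤ B := by
    have := Subgroup.map_mono (f := T.subtype) (normalCore_le (B.subgroupOf T))
    rwa [subgroupOf_map_subtype, inf_of_le_left hBT] at this
  refine ⟨C.map T.subtype, hCB, ?_, ?_⟩
  · refine (normal_subgroupOf_iff_le_normalizer (map_subtype_le C)).1 ?_
    rw [hC]
    exact normalCore_normal _
  · rw [relIndex, hC]
    exact hρ

theorem reflTransGen_of_fin_chain {α : Type*} {r : α → α → Prop} :
    ∀ {n : ℕ} (c : Fin (n + 1) → α), (∀ i : Fin n, r (c i.castSucc) (c i.succ)) →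
      ReflTransGen r (c 0) (c (Fin.last n))
  | 0, _, _ => ReflTransGen.refl
  | _ + 1, c, h =>
    (reflTransGen_of_fin_chain (fun i => c i.castSucc) fun i => h i.castSucc).tail
      (h (Fin.last _))

theorem IsPiPrimeSubnormal.reflTransGen {π : Set ℕ} (h : IsPiPrimeSubnormal π A) :
    ReflTransGen (SubnormalStep (primeCompl π)) A ⊤ := by
  obtain ⟨n, c, hc0, hcn, hstep⟩ := h
  rw [← hc0, ← hcn]
  exact reflTransGen_of_fin_chain c fun i =>
    subnormalStep_of_normalCore (hstep i).1 (hstep i).2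

theorem SubnormalStep.le_of_reflTransGen (h : ReflTransGen (SubnormalStep ρ) A B) : A ≤ B := by
  induction h with
  | refl => exact le_rfl
  | tail _ hBT ih => exact ih.trans hBT.1

variable [Finite G]

theorem SubnormalStep.inf (h : SubnormalStep ρ B T) (H : Subgroup G) :
    SubnormalStep ρ (B ⊓ H) (T ⊓ H) := by
  obtain ⟨hBT, hT | ⟨D, hDB, hT, hD⟩⟩ := h
  · exact ⟨inf_le_inf_right H hBT, Or.inl
      ((inf_le_inf hT le_normalizer).trans inf_normalizer_le_normalizer_inf)⟩
  refine ⟨inf_le_inf_right H hBT, Or.inr ⟨D ⊓ H, inf_le_inf_right H hDB,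
    (inf_le_inf hT le_normalizer).trans inf_normalizer_le_normalizer_inf, hD.of_dvd ?_⟩⟩
  have hDH : (D ⊓ H).relIndex (T ⊓ H) = D.relIndex (T ⊓ H) := by
    rw [← inf_relIndex_right, ← inf_relIndex_right D, inf_assoc, inf_comm H, inf_assoc,
      inf_idem]
  rw [hDH]
  exact relIndex_dvd_relIndex_of_le_normalizer inf_le_left (hDB.trans hBT)
    (inf_le_left.trans hT)

theorem permutes_of_reflTransGen {σ : Set ℕ}
    (hmod : ∀ Y Z : Subgroup G, A ≤ Z → A ⊔ (Y ⊓ Z) = (A ⊔ Y) ⊓ Z) (hρσ : ρ ⊆ σ ∨ ρ ⊆ σᶜ)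
    (hAT : ReflTransGen (SubnormalStep ρ) A T) :
    ∀ H, A ≤ H → ∀ X, IsHallIn σ X (T ⊓ H) → Permutes A X := by
  -- generalized over `H`: the normal step uses the chain cut down to `⟨A, X⟩`
  induction hAT with
  | refl => exact fun H _ X hX => permutes_of_le (hX.le.trans inf_le_left)
  | @tail B T hAB hBT ih =>
    intro H hAH X hX
    have hA : A ≤ B ⊓ H := le_inf (SubnormalStep.le_of_reflTransGen hAB) hAH
    obtain ⟨hle, hT | ⟨D, hDB, hT, hD⟩⟩ := hBT.inf H
    · refine permutes_of_normal_step hmod hA hle hT hX fun Y hY => ?_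
      exact ih (H ⊓ (A ⊔ X)) (le_inf hAH le_sup_left) Y (by rwa [← inf_assoc])
    · exact permutes_of_core_step hmod hρσ hA hle hDB hT hD hX (ih H hAH)

end Chains

theorem Sylow.isHallIn_top {G : Type*} [Group G] [Finite G] {p : ℕ} [Fact p.Prime]
    (P : Sylow p G) : IsHallIn {p} (P : Subgroup G) ⊤ := by
  obtain ⟨n, hn⟩ := IsPGroup.iff_card.1 P.isPGroup'
  refine ⟨le_top, fun q hq hqP => ?_, fun q _ hqP hqp => ?_⟩
  · rw [hn] at hqP
    exact (Nat.prime_dvd_prime_iff_eq hq Fact.out).1 (hq.dvd_of_dvd_pow hqP)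
  · rw [relIndex_top_right, Set.mem_singleton_iff.1 hqp] at hqP
    exact P.not_dvd_index hqP

/-- Corollary 1.4(i): A modular subgroup with a chain whose
non-normal factors are `π'`-groups permutes with every Sylow `p`-subgroup of `G`
for `p ∈ π`, and with every Hall `π'`-subgroup of `G` whenever one exists. -/
theorem modular_piPrime_permutes (π : Set ℕ) (hπ : ∀ p ∈ π, Nat.Prime p)
    {G : Type*} [Group G] [Finite G] (A : Subgroup G)
    (hmod : IsModularSubgroup A) (hchain : IsPiPrimeSubnormal π A) :
    (∀ p ∈ π, ∀ P : Sylow p G, Permutes A (P : Subgroup G)) ∧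
      ((∃ H : Subgroup G, IsHallPiSubgroup (primeCompl π) H) →
        ∀ H : Subgroup G, IsHallPiSubgroup (primeCompl π) H → Permutes A H) := by
  have key : ∀ σ : Set ℕ, primeCompl π ⊆ σ ∨ primeCompl π ⊆ σᶜ →
      ∀ X : Subgroup G, IsHallIn σ X ⊤ → Permutes A X := fun σ hσ X hX =>
    permutes_of_reflTransGen hmod.2 hσ hchain.reflTransGen ⊤ le_top X (by rwa [inf_top_eq])
  refine ⟨fun p hp P => ?_, fun _ H hH => key _ (Or.inl le_rfl) H ?_⟩
  · have : Fact p.Prime := ⟨hπ p hp⟩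
    refine key {p} (Or.inr ?_) P P.isHallIn_top
    rintro q ⟨-, hq⟩ rfl
    exact hq hp
  · refine ⟨le_top, hH.1, fun q hq hqH hqπ => ?_⟩
    rw [relIndex_top_right] at hqH
    exact hH.2 q hq hqH hqπ
end

section
/- Let G be a finite group. Then every chief factor of G below the σ-hypercentre Z_σ(G) (i.e., every chief factor H/K of G with H ≤ Z_σ(G)) is σ-central in G. -/
open Subgroup Pointwise

/-! The product of two `σ`-hypercentral normal subgroups `E` and `N` is `σ`-hypercentral: a chief
factor `H/K` below `EN` either lies below `KE`, and is then `G`-isomorphic to the chief factor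
`(H ∩ E)/(K ∩ E)` below `E`, or it is `G`-isomorphic to `HKE/KE`, which lies below `KE · N` and is
handled by the first case with `N` in place of `E`. Both σ-centrality and being a chief factor
are invariant under the second isomorphism theorem `(A ⊔ B)/B ≅ A/(A ⊓ B)`, and `Z_σ(G)` is a
finite product of `σ`-hypercentral subgroups. -/

open scoped commutatorElement

namespace Subgroup

variable {G : Type*} [Group G]

theorem sup_inf_assoc_of_le_of_normal {x z : Subgroup G} (y : Subgroup G) [x.Normal]
    (h : x ≤ z) : (x ⊔ y) ⊓ z = x ⊔ y ⊓ z := by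
  apply SetLike.coe_injective
  rw [coe_inf, normal_mul, normal_mul, mul_inf_assoc _ _ _ h]

theorem Normal.commutatorElement_mem_left {A : Subgroup G} (hA : A.Normal) {a : G} (ha : a ∈ A)
    (g : G) : ⁅a, g⁆ ∈ A := by
  rw [commutatorElement_def]
  simpa only [mul_assoc] using mul_mem ha (hA.conj_mem _ (inv_mem ha) g)

end Subgroup

open Subgroup

section Perspectivity

variable {G : Type*} [Group G] {A B : Subgroup G}

theorem isChiefFactor_sup_iff (hA : A.Normal) (hB : B.Normal) :
    IsChiefFactor (A ⊔ B) B ↔ IsChiefFactor A (A ⊓ B) := by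
  have hAB : (A ⊓ B).Normal := normal_inf_normal A B
  constructor
  · rintro ⟨-, -, hlt, hmax⟩
    refine ⟨hAB, hA, inf_le_left.lt_of_ne fun h ↦ hlt.ne ?_, fun L hL hABL hLA ↦ ?_⟩
    · rw [sup_eq_right.mpr (inf_eq_left.mp h)]
    rcases hmax (L ⊔ B) (sup_normal L B) le_sup_right (sup_le_sup_right hLA B) with h | h
    · exact .inl (le_antisymm (le_inf hLA (le_sup_left.trans h.le)) hABL)
    · refine .inr (calc
        A = (L ⊔ B) ⊓ A := by rw [h, inf_eq_right.mpr le_sup_left]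
        _ = L ⊔ B ⊓ A := sup_inf_assoc_of_le_of_normal B hLA
        _ = L := by rw [inf_comm, sup_eq_left.mpr hABL]).symm
  · rintro ⟨-, -, hlt, hmax⟩
    refine ⟨hB, sup_normal A B, le_sup_right.lt_of_ne fun h ↦ hlt.ne ?_, fun L hL hBL hLAB ↦ ?_⟩
    · rw [inf_eq_left.mpr (sup_eq_right.mp h.symm)]
    rcases hmax (L ⊓ A) (normal_inf_normal L A) (le_inf (inf_le_right.trans hBL) inf_le_left)
      inf_le_right with h | h
    · refine .inl (calc
        L = (B ⊔ A) ⊓ L := by rw [sup_comm, inf_eq_right.mpr hLAB]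
        _ = B ⊔ A ⊓ L := sup_inf_assoc_of_le_of_normal A hBL
        _ = B := by rw [inf_comm, h, sup_eq_left.mpr inf_le_right])
    · exact .inr (le_antisymm hLAB (sup_le (inf_eq_right.mp h) hBL))

theorem mem_quotCentralizer_iff {H K : Subgroup G} (hK : K.Normal) {g : G} :
    g ∈ quotCentralizer H K hK ↔ ∀ h ∈ H, ⁅h, g⁆ ∈ K := by
  simp only [quotCentralizer, mem_comap, mem_centralizer_iff, coe_map, Set.forall_mem_image,
    SetLike.mem_coe, QuotientGroup.mk'_apply, ← QuotientGroup.mk_mul, QuotientGroup.eq_iff_div_mem,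
    div_eq_mul_inv, mul_inv_rev, ← mul_assoc, commutatorElement_def]

theorem quotCentralizer_sup_eq (hA : A.Normal) (hB : B.Normal) (hAB : (A ⊓ B).Normal) :
    quotCentralizer (A ⊔ B) B hB = quotCentralizer A (A ⊓ B) hAB := by
  ext g
  simp only [mem_quotCentralizer_iff]
  constructor
  · exact fun hg a ha ↦ mem_inf.mpr ⟨hA.commutatorElement_mem_left ha g, hg a (mem_sup_left ha)⟩
  · intro hg x hx
    obtain ⟨a, ha, b, hb, rfl⟩ := mem_sup_of_normal_right.mp hx
    rw [commutatorElement_mul_left_eq_conj_mul]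
    exact mul_mem (hB.conj_mem _ (hB.commutatorElement_mem_left hb g) a) (mem_inf.mp (hg a ha)).2

theorem card_sup_quotient_eq [B.Normal] :
    Nat.card ((A ⊔ B : Subgroup G) ⧸ B.subgroupOf (A ⊔ B)) =
      Nat.card (A ⧸ (A ⊓ B).subgroupOf A) := by
  rw [inf_subgroupOf_left]
  exact Nat.card_congr (QuotientGroup.quotientInfEquivProdNormalQuotient A B).toEquiv.symm

theorem isSigmaCentral_sup_iff {I : Type*} (σ : I → Set ℕ) (hA : A.Normal) (hB : B.Normal)
    (hAB : (A ⊓ B).Normal) :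
    IsSigmaCentral σ (A ⊔ B) B hB ↔ IsSigmaCentral σ A (A ⊓ B) hAB := by
  unfold IsSigmaCentral IsPiGroup
  rw [card_sup_quotient_eq, quotCentralizer_sup_eq hA hB hAB]

end Perspectivity

section Hypercentral

variable {I : Type*} {σ : I → Set ℕ} {G : Type*} [Group G] {E N H K : Subgroup G}

theorem IsSigmaHypercentral.isSigmaCentral (hE : IsSigmaHypercentral σ E)
    (hc : IsChiefFactor H K) (hHE : H ≤ E) : IsSigmaCentral σ H K hc.1 := by
  rcases hE.2 with rfl | hE
  · exact absurd (hc.2.2.1.trans_le hHE) not_lt_bot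
  · exact hE H K hc hHE

theorem IsSigmaHypercentral.isSigmaCentral_of_le_sup (hE : IsSigmaHypercentral σ E)
    (hc : IsChiefFactor H K) (hH : H ≤ K ⊔ E) : IsSigmaCentral σ H K hc.1 := by
  have := hE.1; have := hc.1; have := hc.2.1
  have hHK : H ⊓ E ⊔ K = H := calc
    H ⊓ E ⊔ K = K ⊔ E ⊓ H := by rw [sup_comm, inf_comm]
    _ = (K ⊔ E) ⊓ H := (sup_inf_assoc_of_le_of_normal E hc.2.2.1.le).symm
    _ = H := inf_eq_right.mpr hH
  have hc' : IsChiefFactor (H ⊓ E ⊔ K) K := by rwa [hHK]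
  have hcentral := hE.isSigmaCentral
    ((isChiefFactor_sup_iff (normal_inf_normal H E) hc.1).mp hc') inf_le_right
  rw [← isSigmaCentral_sup_iff σ (normal_inf_normal H E) hc.1, hHK] at hcentral
  exact hcentral

theorem IsSigmaHypercentral.sup (hE : IsSigmaHypercentral σ E) (hN : IsSigmaHypercentral σ N) :
    IsSigmaHypercentral σ (E ⊔ N) := by
  have := hE.1; have := hN.1
  refine ⟨sup_normal E N, .inr fun H K hc hH ↦ ?_⟩
  by_cases hHKE : H ≤ K ⊔ E
  · exact hE.isSigmaCentral_of_le_sup hc hHKE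
  have := hc.1; have := hc.2.1
  have hKE : (K ⊔ E).Normal := sup_normal K E
  have hHK : H ⊓ (K ⊔ E) = K :=
    (hc.2.2.2 _ (normal_inf_normal H _) (le_inf hc.2.2.1.le le_sup_left) inf_le_left).resolve_right
      fun h ↦ hHKE (inf_eq_left.mp h)
  have hc' : IsChiefFactor (H ⊔ (K ⊔ E)) (K ⊔ E) :=
    (isChiefFactor_sup_iff hc.2.1 hKE).mpr (by rwa [hHK])
  have hcentral := hN.isSigmaCentral_of_le_sup hc'
    (sup_le (hH.trans (sup_le_sup_right le_sup_right N)) le_sup_left)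
  rw [isSigmaCentral_sup_iff σ hc.2.1 hKE (normal_inf_normal H _)] at hcentral
  -- `rw [hHK]` would fail: the normality proof in `hcentral` mentions `H ⊓ (K ⊔ E)`.
  convert hcentral using 2
  exact hHK.symm

theorem isSigmaHypercentral_sigmaHypercentre [Finite G] :
    IsSigmaHypercentral σ (sigmaHypercentre σ G) := by
  have : Finite (Subgroup G) := Finite.of_injective _ SetLike.coe_injective
  have hsup : SupClosed {E : Subgroup G | IsSigmaHypercentral σ E} := fun _ hE _ hN ↦ hE.sup hN
  exact hsup.sSup_mem (Set.toFinite _) ⟨normal_bot, .inl rfl⟩ subset_rfl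

end Hypercentral

theorem chiefFactor_below_sigmaHypercentre_sigmaCentral_general {I : Type*}
    (σ : I → Set ℕ) {G : Type*} [Group G] [Finite G] :
    ∀ H K : Subgroup G, (hc : IsChiefFactor H K) → H ≤ sigmaHypercentre σ G →
      IsSigmaCentral σ H K hc.1 :=
  fun _ _ hc hH ↦ isSigmaHypercentral_sigmaHypercentre.isSigmaCentral hc hH

/-- Every chief factor of `G` below the `σ`-hypercentre `Z_σ(G)` is
`σ`-central in `G`. -/
theorem chiefFactor_below_sigmaHypercentre_sigmaCentral {I : Type*}
    (σ : I → Set ℕ) (hσ : IsPrimePartition σ) {G : Type*} [Group G] [Finite G] :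
    ∀ H K : Subgroup G, (hc : IsChiefFactor H K) → H ≤ sigmaHypercentre σ G →
      IsSigmaCentral σ H K hc.1 :=
  chiefFactor_below_sigmaHypercentre_sigmaCentral_general σ
end
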